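/- arXiv:1201.1717 — 4 statements merged into one kernel-verified Lean document; each statement's English description precedes it below -/
import Mathlib

section
/- For every positive integer k, the ringed tree RT(k) is 40-hyperbolic with respect to Gromov's four-point condition: for all quadruples of vertices u,v,w,x of RT(k), δ(u,v,w,x) ≤ 40. -/
/-- The Gromov four-point quantity `δ(u,v,w,x)`: with the three pairings of the
four vertices sorted, half the difference between the largest and the second
largest pair-sum of graph distances. -/
noncomputable def deltaFour {V : Type*} (G : SimpleGraph V) (u v w x : V) : ℝ :=
  let a : ℝ := (G.dist u v : ℝ) + (G.dist w x : ℝ)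
  let b : ℝ := (G.dist u x : ℝ) + (G.dist v w : ℝ)
  let c : ℝ := (G.dist u w : ℝ) + (G.dist v x : ℝ)
  (2 * max a (max b c) + min a (min b c) - (a + b + c)) / 2

/-- The hyperbolicity `δ(G)` of a graph: the supremum of `δ(u,v,w,x)` over all
quadruples of vertices. -/
noncomputable def hyperbolicity {V : Type*} (G : SimpleGraph V) : ℝ :=
  ⨆ u, ⨆ v, ⨆ w, ⨆ x, deltaFour G u v w x

/-- Vertex set of the ringed tree with `k` levels: level `i` (for `i < k`) consists of the
integers `{0, …, 2^i - 1}`. -/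
abbrev RTV (k : ℕ) : Type := Σ i : Fin k, Fin (2 ^ (i : ℕ))

/-- Tree adjacency: each vertex `σ` at level `i` is joined to its children `2σ` and `2σ+1`
at level `i+1`. -/
def treeAdj {k : ℕ} (u v : RTV k) : Prop :=
  ((u.1 : ℕ) + 1 = (v.1 : ℕ) ∧ ((v.2 : ℕ) = 2 * (u.2 : ℕ) ∨ (v.2 : ℕ) = 2 * (u.2 : ℕ) + 1)) ∨
  ((v.1 : ℕ) + 1 = (u.1 : ℕ) ∧ ((u.2 : ℕ) = 2 * (v.2 : ℕ) ∨ (u.2 : ℕ) = 2 * (v.2 : ℕ) + 1))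

/-- Ring adjacency: at each level `i ≥ 1`, `m` is joined to `m + 1 (mod 2^i)`. -/
def ringAdj {k : ℕ} (u v : RTV k) : Prop :=
  (u.1 : ℕ) = (v.1 : ℕ) ∧ 1 ≤ (u.1 : ℕ) ∧
    ((v.2 : ℕ) = ((u.2 : ℕ) + 1) % 2 ^ (u.1 : ℕ) ∨ (u.2 : ℕ) = ((v.2 : ℕ) + 1) % 2 ^ (v.1 : ℕ))

lemma ringAdj_no_loop {i m : ℕ} (hm : m < 2 ^ i) (hi : 1 ≤ i) : m ≠ (m + 1) % 2 ^ i := by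
  have h2 : 2 ≤ 2 ^ i := by
    calc 2 = 2 ^ 1 := by norm_num
    _ ≤ 2 ^ i := Nat.pow_le_pow_right (by norm_num) hi
  intro h
  rcases Nat.lt_or_ge (m + 1) (2 ^ i) with hlt | hge
  · rw [Nat.mod_eq_of_lt hlt] at h; omega
  · have he : m + 1 = 2 ^ i := by omega
    rw [he, Nat.mod_self] at h; omega

/-- The ringed tree `RT(k)`: the fully binary tree with `k` levels, with the vertices of each
level `i ≥ 1` additionally connected into a ring. -/
def ringedTree (k : ℕ) : SimpleGraph (RTV k) where
  Adj u v := treeAdj u v ∨ ringAdj u v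
  symm := by
    constructor
    rintro u v (h | ⟨h1, h2, h3⟩)
    · exact Or.inl (Or.symm h)
    · exact Or.inr ⟨h1.symm, h1 ▸ h2, Or.symm h3⟩
  loopless := by
    constructor
    rintro u ((⟨h1, _⟩ | ⟨h1, _⟩) | ⟨_, h2, (h3 | h3)⟩)
    · omega
    · omega
    · exact ringAdj_no_loop u.2.isLt h2 h3
    · exact ringAdj_no_loop u.2.isLt h2 h3

/-- Cyclic distance on a ring with `N` vertices: `min(|a-b|, N - |a-b|)`. -/
def cycDist (N a b : ℕ) : ℕ := min (Nat.dist a b) (N - Nat.dist a b)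

/-- Ring distance `d_R(u,v)` of two vertices of a ringed tree on the same level. -/
def rtRingDist {k : ℕ} (u v : RTV k) : ℕ := cycDist (2 ^ (u.1 : ℕ)) (u.2 : ℕ) (v.2 : ℕ)

/-- The parent of a vertex `m` at level `i ≥ 1` is `⌊m/2⌋` at level `i - 1`. -/
def rtParent {k : ℕ} (u : RTV k) (h : 1 ≤ (u.1 : ℕ)) : RTV k :=
  ⟨⟨(u.1 : ℕ) - 1, Nat.lt_of_le_of_lt (Nat.sub_le _ 1) u.1.isLt⟩,
   ⟨(u.2 : ℕ) / 2, by
      have h1 : (u.2 : ℕ) < 2 ^ (u.1 : ℕ) := u.2.isLt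
      have h2 : 2 ^ ((u.1 : ℕ) - 1) * 2 = 2 ^ (u.1 : ℕ) := by
        rw [← pow_succ]; congr 1; omega
      show (u.2 : ℕ) / 2 < 2 ^ ((u.1 : ℕ) - 1)
      exact Nat.div_lt_of_lt_mul (by omega)⟩⟩

/-!
Let `meetLevel u v` be the deepest level at which the ancestors of `u` and `v` are within ring
distance `2`. Going up one level at most halves (rounding up) the ring distance of ancestors, so
below the meeting level the ancestors stay within distance `2`, while above it their distance
grows at least linearly. Hence a geodesic climbs to about the meeting level, crosses the ring in
at most two steps and descends again: `d(u,v) = |u| + |v| - 2 meetLevel u v` up to `2`. By the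
triangle inequality at level `min (meetLevel u v) (meetLevel v w)` followed by one halving step,
the meeting level is an ultrametric up to `1`. So `d` is a tree metric up to a bounded error, and
the four-point condition holds with `δ = 6`.
-/

lemma two_mul_max_add_min_sub_le {a b c e : ℝ} (ha : a ≤ max b c + e) (hb : b ≤ max a c + e)
    (hc : c ≤ max a b + e) : 2 * max a (max b c) + min a (min b c) - (a + b + c) ≤ e := by
  simp only [max_def, min_def] at *
  split_ifs at * <;> linarith

lemma deltaFour_le_of_four_point {V : Type*} (G : SimpleGraph V) (n : ℕ)
    (h : ∀ u v w x : V,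
      G.dist u v + G.dist w x ≤ max (G.dist u x + G.dist v w) (G.dist u w + G.dist v x) + n)
    (u v w x : V) : deltaFour G u v w x ≤ n / 2 := by
  have h₂ := h u x w v
  have h₃ := h u w v x
  rw [G.dist_comm (u := w) (v := v), G.dist_comm (u := x) (v := v),
    G.dist_comm (u := x) (v := w)] at h₂
  rw [G.dist_comm (u := w) (v := v), max_comm] at h₃
  exact div_le_div_of_nonneg_right (two_mul_max_add_min_sub_le (by exact_mod_cast h u v w x)
    (by exact_mod_cast h₂) (by exact_mod_cast h₃)) zero_le_two

/-- In a tree, `h` is the depth and `m a b` the depth of the last common ancestor of `a`, `b`. -/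
lemma four_point_of_quasiUltrametric {V : Type*} (d : V → V → ℕ) (h : V → ℕ) (m : V → V → ℕ)
    (c e : ℕ) (hm : ∀ a b, m a b = m b a)
    (hup : ∀ a b, d a b + 2 * m a b ≤ h a + h b + c)
    (hlow : ∀ a b, h a + h b ≤ d a b + 2 * m a b + c)
    (hultra : ∀ a b z, min (m a b) (m b z) ≤ m a z + e) (u v w x : V) :
    d u v + d w x ≤ max (d u x + d v w) (d u w + d v x) + (4 * c + 4 * e) := by
  have hgromov : min (m u x + m v w) (m u w + m v x) ≤ m u v + m w x + 2 * e := by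
    have := hm u v; have := hm w x; have := hm u x; have := hm v w; have := hm u w
    have := hm v x
    have := hultra u w v; have := hultra u x v; have := hultra w u x; have := hultra w v x
    omega
  have := hup u v; have := hup w x
  have := hlow u x; have := hlow v w; have := hlow u w; have := hlow v x
  omega

lemma cycDist_comm (N a b : ℕ) : cycDist N a b = cycDist N b a := by
  simp only [cycDist, Nat.dist_comm]

lemma cycDist_le (N a b : ℕ) : cycDist N a b ≤ N := by
  simp only [cycDist]
  omega

lemma cycDist_triangle {N a b c : ℕ} (ha : a < N) (hb : b < N) (hc : c < N) :
    cycDist N a c ≤ cycDist N a b + cycDist N b c := by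
  simp only [cycDist, Nat.dist]
  omega

lemma two_mul_cycDist_div_two_le (N a b : ℕ) :
    2 * cycDist N (a / 2) (b / 2) ≤ cycDist (2 * N) a b + 1 := by
  simp only [cycDist, Nat.dist]
  omega

lemma cycDist_div_two_le (N a b : ℕ) : cycDist N (a / 2) (b / 2) ≤ cycDist (2 * N) a b := by
  have := two_mul_cycDist_div_two_le N a b
  omega

lemma cycDist_succ_mod_le_one {N m : ℕ} (hm : m < N) : cycDist N m ((m + 1) % N) ≤ 1 := by
  rcases Nat.lt_or_ge (m + 1) N with h | h
  · rw [Nat.mod_eq_of_lt h]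
    simp only [cycDist, Nat.dist]
    omega
  · rw [show m + 1 = N by omega, Nat.mod_self]
    simp only [cycDist, Nat.dist]
    omega

namespace RingedTree

open SimpleGraph

variable {k : ℕ}

/-- The index at level `l` of the ancestor of the vertex `m` at level `i ≥ l`. -/
def anc (l i m : ℕ) : ℕ := m / 2 ^ (i - l)

lemma anc_lt {l i m : ℕ} (h : l ≤ i) (hm : m < 2 ^ i) : anc l i m < 2 ^ l := by
  have : 2 ^ i = 2 ^ (i - l) * 2 ^ l := by rw [← pow_add, Nat.sub_add_cancel h]
  exact Nat.div_lt_of_lt_mul (this ▸ hm)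

lemma anc_self (i m : ℕ) : anc i i m = m := by
  simp [anc]

lemma anc_anc {l l' i m : ℕ} (hl : l ≤ l') (hl' : l' ≤ i) : anc l l' (anc l' i m) = anc l i m := by
  simp only [anc, Nat.div_div_eq_div_mul, ← pow_add]
  congr 2
  omega

lemma anc_eq_anc_succ_div_two {l i m : ℕ} (h : l < i) : anc l i m = anc (l + 1) i m / 2 := by
  rw [← anc_anc (Nat.le_succ l) h]
  simp [anc]

lemma anc_succ_level {l i m : ℕ} (h : l ≤ i) : anc l (i + 1) m = anc l i (m / 2) := by
  rw [← anc_anc h (Nat.le_succ i)]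
  simp [anc]

lemma cycDist_anc_le {l i : ℕ} (a b : ℕ) (h : l ≤ i) :
    cycDist (2 ^ l) (anc l i a) (anc l i b) ≤ cycDist (2 ^ i) a b := by
  induction i generalizing a b with
  | zero => rw [Nat.le_zero.1 h, anc_self, anc_self]
  | succ i ih =>
    rcases Nat.of_le_succ h with h | rfl
    · rw [anc_succ_level h, anc_succ_level h, pow_succ']
      exact (ih _ _ h).trans (cycDist_div_two_le _ a b)
    · rw [anc_self, anc_self]

def ancestor (u : RTV k) (l : ℕ) (h : l ≤ (u.1 : ℕ)) : RTV k :=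
  ⟨⟨l, h.trans_lt u.1.isLt⟩, ⟨anc l u.1 u.2, anc_lt h u.2.isLt⟩⟩

def ancDist (l : ℕ) (u v : RTV k) : ℕ :=
  cycDist (2 ^ l) (anc l u.1 u.2) (anc l v.1 v.2)

lemma ancDist_comm (l : ℕ) (u v : RTV k) : ancDist l u v = ancDist l v u :=
  cycDist_comm _ _ _

lemma ancDist_triangle {l : ℕ} {u v w : RTV k} (hu : l ≤ (u.1 : ℕ)) (hv : l ≤ (v.1 : ℕ))
    (hw : l ≤ (w.1 : ℕ)) : ancDist l u w ≤ ancDist l u v + ancDist l v w :=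
  cycDist_triangle (anc_lt hu u.2.isLt) (anc_lt hv v.2.isLt) (anc_lt hw w.2.isLt)

lemma two_mul_ancDist_le {l : ℕ} {u v : RTV k} (hu : l < (u.1 : ℕ)) (hv : l < (v.1 : ℕ)) :
    2 * ancDist l u v ≤ ancDist (l + 1) u v + 1 := by
  rw [ancDist, ancDist, anc_eq_anc_succ_div_two hu, anc_eq_anc_succ_div_two hv, pow_succ']
  exact two_mul_cycDist_div_two_le _ _ _

lemma ancDist_mono {l l' : ℕ} {u v : RTV k} (hl : l ≤ l') (hu : l' ≤ (u.1 : ℕ))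
    (hv : l' ≤ (v.1 : ℕ)) : ancDist l u v ≤ ancDist l' u v := by
  rw [ancDist, ← anc_anc hl hu, ← anc_anc hl hv]
  exact cycDist_anc_le _ _ hl

lemma ancDist_le_rtRingDist {l : ℕ} {u v : RTV k} (h : (u.1 : ℕ) = v.1) (hl : l ≤ (u.1 : ℕ)) :
    ancDist l u v ≤ rtRingDist u v := by
  obtain ⟨i, a⟩ := u
  obtain ⟨j, b⟩ := v
  obtain rfl : i = j := Fin.ext h
  exact cycDist_anc_le _ _ hl

lemma rtRingDist_le_one {u v : RTV k} (h : ringAdj u v) : rtRingDist u v ≤ 1 := by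
  obtain ⟨hlev, -, hv | hu⟩ := h
  · rw [rtRingDist, hv]
    exact cycDist_succ_mod_le_one u.2.isLt
  · rw [rtRingDist, cycDist_comm, hu, hlev]
    exact cycDist_succ_mod_le_one v.2.isLt

lemma anc_eq_of_treeChild {l : ℕ} {u v : RTV k}
    (h : (u.1 : ℕ) + 1 = v.1 ∧ ((v.2 : ℕ) = 2 * u.2 ∨ (v.2 : ℕ) = 2 * u.2 + 1))
    (hl : l ≤ (u.1 : ℕ)) : anc l v.1 v.2 = anc l u.1 u.2 := by
  have := anc_succ_level (i := u.1) (m := v.2) hl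
  rw [h.1] at this
  rw [this]
  congr 1
  omega

/-- Up to an additive constant, the Gromov product of `u` and `v` based at the root. -/
def meetLevel (u v : RTV k) : ℕ :=
  Nat.findGreatest (fun l => ancDist l u v ≤ 2) (min u.1 v.1)

lemma meetLevel_le_left (u v : RTV k) : meetLevel u v ≤ u.1 :=
  (Nat.findGreatest_le _).trans (min_le_left _ _)

lemma meetLevel_le_right (u v : RTV k) : meetLevel u v ≤ v.1 :=
  (Nat.findGreatest_le _).trans (min_le_right _ _)

lemma meetLevel_comm (u v : RTV k) : meetLevel u v = meetLevel v u := by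
  unfold meetLevel
  rw [min_comm]
  congr 1
  funext l
  rw [ancDist_comm]

lemma ancDist_meetLevel_le (u v : RTV k) : ancDist (meetLevel u v) u v ≤ 2 :=
  Nat.findGreatest_spec (P := fun l => ancDist l u v ≤ 2) (Nat.zero_le _)
    ((cycDist_le _ _ _).trans (by norm_num))

lemma le_meetLevel {l : ℕ} {u v : RTV k} (hu : l ≤ (u.1 : ℕ)) (hv : l ≤ (v.1 : ℕ))
    (h : ancDist l u v ≤ 2) : l ≤ meetLevel u v :=
  Nat.le_findGreatest (le_min hu hv) h

lemma ancDist_le_two_of_le_meetLevel {l : ℕ} {u v : RTV k} (h : l ≤ meetLevel u v) :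
    ancDist l u v ≤ 2 :=
  (ancDist_mono h (meetLevel_le_left u v) (meetLevel_le_right u v)).trans
    (ancDist_meetLevel_le u v)

lemma add_le_ancDist_of_meetLevel_lt (u v : RTV k) (t : ℕ)
    (h : meetLevel u v + t + 1 ≤ min u.1 v.1) :
    2 * t + 3 ≤ ancDist (meetLevel u v + t + 1) u v := by
  have hu := h.trans (min_le_left _ _)
  have hv := h.trans (min_le_right _ _)
  induction t with
  | zero =>
    show 3 ≤ ancDist (meetLevel u v + 1) u v
    by_contra hlt
    have := le_meetLevel (l := meetLevel u v + 1) (u := u) (v := v) (by omega) (by omega)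
      (by omega)
    omega
  | succ t ih =>
    show 2 * (t + 1) + 3 ≤ ancDist (meetLevel u v + t + 1 + 1) u v
    have := two_mul_ancDist_le (l := meetLevel u v + t + 1) (u := u) (v := v) (by omega)
      (by omega)
    have := ih (by omega) (by omega) (by omega)
    omega

lemma min_meetLevel_le (u v w : RTV k) :
    min (meetLevel u v) (meetLevel v w) ≤ meetLevel u w + 1 := by
  set l := min (meetLevel u v) (meetLevel v w)
  have hu : l ≤ u.1 := (min_le_left _ _).trans (meetLevel_le_left u v)
  have hv : l ≤ v.1 := (min_le_left _ _).trans (meetLevel_le_right u v)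
  have hw : l ≤ w.1 := (min_le_right _ _).trans (meetLevel_le_right v w)
  have huv : ancDist l u v ≤ 2 := ancDist_le_two_of_le_meetLevel (min_le_left _ _)
  have hvw : ancDist l v w ≤ 2 := ancDist_le_two_of_le_meetLevel (min_le_right _ _)
  have huw : ancDist l u w ≤ 4 := (ancDist_triangle hu hv hw).trans (by omega)
  rcases Nat.eq_zero_or_pos l with hl | hl
  · omega
  · have hstep := two_mul_ancDist_le (l := l - 1) (u := u) (v := w) (by omega) (by omega)
    rw [Nat.sub_add_cancel hl] at hstep
    have := le_meetLevel (l := l - 1) (u := u) (v := w) (by omega) (by omega) (by omega)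
    omega

lemma adj_rtParent (u : RTV k) (h : 1 ≤ (u.1 : ℕ)) : (ringedTree k).Adj u (rtParent u h) :=
  Or.inl (Or.inr ⟨by simp only [rtParent]; omega, by simp only [rtParent]; omega⟩)

lemma exists_walk_ancestor (u : RTV k) (l : ℕ) (h : l ≤ (u.1 : ℕ)) :
    ∃ p : (ringedTree k).Walk u (ancestor u l h), p.length = u.1 - l := by
  obtain ⟨n, hn⟩ : ∃ n, (u.1 : ℕ) - l = n := ⟨_, rfl⟩
  rw [hn]
  induction n generalizing u with
  | zero =>
    have hl : l = u.1 := by omega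
    have hu : ancestor u l h = u :=
      Sigma.ext (Fin.ext hl)
        ((Fin.heq_ext_iff (congrArg (2 ^ ·) hl)).2 (by simp [ancestor, anc, hl]))
    exact ⟨Walk.nil.copy rfl hu.symm, by simp⟩
  | succ n ih =>
    have h1 : 1 ≤ (u.1 : ℕ) := by omega
    have h' : l ≤ ((rtParent u h1).1 : ℕ) := by simp only [rtParent]; omega
    obtain ⟨p, hp⟩ := ih (rtParent u h1) h' (by simp only [rtParent]; omega)
    have hanc : ancestor (rtParent u h1) l h' = ancestor u l h := by
      have := anc_succ_level (l := l) (i := (u.1 : ℕ) - 1) (m := u.2) (by omega)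
      rw [Nat.sub_add_cancel h1] at this
      exact Sigma.ext rfl (heq_of_eq (Fin.ext this.symm))
    exact ⟨Walk.cons (adj_rtParent u h1) (p.copy rfl hanc), by simp [hp]⟩

lemma exists_walk_of_add_mod_eq {i : Fin k} (hi : 1 ≤ (i : ℕ)) (a : Fin (2 ^ (i : ℕ))) (j : ℕ) :
    ∀ b : Fin (2 ^ (i : ℕ)), ((a : ℕ) + j) % 2 ^ (i : ℕ) = b →
      ∃ p : (ringedTree k).Walk ⟨i, a⟩ ⟨i, b⟩, p.length = j := by
  induction j with
  | zero =>
    intro b hb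
    obtain rfl : a = b := Fin.ext (by simpa [Nat.mod_eq_of_lt a.isLt] using hb)
    exact ⟨Walk.nil, rfl⟩
  | succ j ih =>
    intro b hb
    let c : Fin (2 ^ (i : ℕ)) := ⟨((a : ℕ) + j) % 2 ^ (i : ℕ), Nat.mod_lt _ (by positivity)⟩
    obtain ⟨p, hp⟩ := ih c rfl
    have hadj : (ringedTree k).Adj ⟨i, c⟩ ⟨i, b⟩ :=
      Or.inr ⟨rfl, hi, Or.inl (by rw [← hb, Nat.mod_add_mod, add_assoc])⟩
    exact ⟨p.concat hadj, by simp [hp]⟩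

lemma exists_walk_length_le_rtRingDist {u v : RTV k} (h : u.1 = v.1) :
    ∃ p : (ringedTree k).Walk u v, p.length ≤ rtRingDist u v := by
  obtain ⟨i, a⟩ := u
  obtain ⟨j, b⟩ := v
  obtain rfl : i = j := h
  wlog hab : (a : ℕ) ≤ b generalizing a b
  · obtain ⟨p, hp⟩ := this b a (by omega)
    exact ⟨p.reverse, by rw [Walk.length_reverse, rtRingDist, cycDist_comm]; exact hp⟩
  rcases Nat.eq_zero_or_pos (i : ℕ) with hi | hi
  · obtain rfl : a = b := Fin.ext (by have := a.isLt; have := b.isLt; simp only [hi] at *; omega)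
    exact ⟨Walk.nil, Nat.zero_le _⟩
  have hN : (b : ℕ) < 2 ^ (i : ℕ) := b.isLt
  obtain ⟨p, hp⟩ := exists_walk_of_add_mod_eq hi a (b - a) b
    (by rw [Nat.add_sub_cancel' hab, Nat.mod_eq_of_lt hN])
  obtain ⟨q, hq⟩ := exists_walk_of_add_mod_eq hi b (2 ^ (i : ℕ) - (b - a)) a
    (by rw [show (b : ℕ) + (2 ^ (i : ℕ) - (b - a)) = a + 2 ^ (i : ℕ) by omega, Nat.add_mod_right,
      Nat.mod_eq_of_lt a.isLt])
  simp only [rtRingDist, cycDist, Nat.dist_eq_sub_of_le hab]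
  rcases le_total ((b : ℕ) - a) (2 ^ (i : ℕ) - (b - a)) with hle | hle
  · exact ⟨p, by rw [hp, min_eq_left hle]⟩
  · exact ⟨q.reverse, by rw [Walk.length_reverse, hq, min_eq_right hle]⟩

lemma exists_walk_length_le (u v : RTV k) {l : ℕ} (hu : l ≤ (u.1 : ℕ)) (hv : l ≤ (v.1 : ℕ)) :
    ∃ p : (ringedTree k).Walk u v, p.length ≤ (u.1 - l) + ancDist l u v + (v.1 - l) := by
  obtain ⟨p, hp⟩ := exists_walk_ancestor u l hu
  obtain ⟨q, hq⟩ :=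
    exists_walk_length_le_rtRingDist (u := ancestor u l hu) (v := ancestor v l hv) rfl
  obtain ⟨r, hr⟩ := exists_walk_ancestor v l hv
  refine ⟨p.append (q.append r.reverse), ?_⟩
  have : rtRingDist (ancestor u l hu) (ancestor v l hv) = ancDist l u v := rfl
  simp only [Walk.length_append, Walk.length_reverse, hp, hr]
  omega

lemma reachable (u v : RTV k) : (ringedTree k).Reachable u v := by
  obtain ⟨p, -⟩ := exists_walk_length_le u v (Nat.zero_le _) (Nat.zero_le _)
  exact p.reachable

lemma dist_add_two_mul_meetLevel_le (u v : RTV k) :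
    (ringedTree k).dist u v + 2 * meetLevel u v ≤ u.1 + v.1 + 2 := by
  obtain ⟨p, hp⟩ := exists_walk_length_le u v (meetLevel_le_left u v) (meetLevel_le_right u v)
  have := (dist_le p).trans hp
  have := ancDist_meetLevel_le u v
  have := meetLevel_le_left u v
  have := meetLevel_le_right u v
  omega

lemma exists_level_le_length {u v : RTV k} (p : (ringedTree k).Walk u v) :
    ∃ l ≤ (u.1 : ℕ), l ≤ (v.1 : ℕ) ∧ (u.1 - l) + (v.1 - l) + ancDist l u v ≤ p.length + 2 := by
  induction p with
  | nil => exact ⟨_, le_rfl, le_rfl, by simp [ancDist, cycDist]⟩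
  | @cons a b c hadj p ih =>
    obtain ⟨l, hlb, hlc, hlen⟩ := ih
    rw [Walk.length_cons]
    rcases hadj with (hab | hba) | hring
    · rcases le_or_gt l a.1 with hla | hla
      · have : ancDist l a c = ancDist l b c := by
          rw [ancDist, ancDist, anc_eq_of_treeChild hab hla]
        exact ⟨l, hla, hlc, by omega⟩
      · have : ancDist a.1 a c = ancDist a.1 b c := by
          rw [ancDist, ancDist, anc_eq_of_treeChild hab le_rfl]
        have := ancDist_mono (l := a.1) (l' := l) (u := b) (v := c) (by omega) hlb hlc
        exact ⟨a.1, le_rfl, by omega, by omega⟩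
    · have : ancDist l b c = ancDist l a c := by
        rw [ancDist, ancDist, anc_eq_of_treeChild hba hlb]
      exact ⟨l, by omega, hlc, by omega⟩
    · have hlev : (a.1 : ℕ) = b.1 := hring.1
      have := (ancDist_le_rtRingDist (l := l) hlev (by omega)).trans (rtRingDist_le_one hring)
      have := ancDist_triangle (l := l) (u := a) (v := b) (w := c) (by omega) hlb hlc
      exact ⟨l, by omega, hlc, by omega⟩

lemma le_dist_add_two_mul_meetLevel (u v : RTV k) :
    (u.1 : ℕ) + v.1 ≤ (ringedTree k).dist u v + 2 * meetLevel u v + 2 := by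
  obtain ⟨p, hp⟩ := (reachable u v).exists_walk_length_eq_dist
  obtain ⟨l, hlu, hlv, hlen⟩ := exists_level_le_length p
  rw [hp] at hlen
  rcases le_or_gt l (meetLevel u v) with hl | hl
  · omega
  · obtain ⟨t, rfl⟩ : ∃ t, l = meetLevel u v + t + 1 := ⟨l - meetLevel u v - 1, by omega⟩
    have := add_le_ancDist_of_meetLevel_lt u v t (le_min hlu hlv)
    omega

end RingedTree

theorem ringedTree_forty_hyperbolic_general (k : ℕ) (u v w x : RTV k) :
    deltaFour (ringedTree k) u v w x ≤ 40 := by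
  have h := deltaFour_le_of_four_point (ringedTree k) _
    (four_point_of_quasiUltrametric _ (fun u => (u.1 : ℕ)) RingedTree.meetLevel 2 1
      RingedTree.meetLevel_comm RingedTree.dist_add_two_mul_meetLevel_le
      RingedTree.le_dist_add_two_mul_meetLevel RingedTree.min_meetLevel_le) u v w x
  norm_num at h
  linarith

/-- For every positive integer `k`, the ringed tree `RT(k)` is
`40`-hyperbolic for Gromov's four-point condition: `δ(u,v,w,x) ≤ 40` for all vertices. -/
theorem ringedTree_forty_hyperbolic (k : ℕ) (hk : 0 < k) (u v w x : RTV k) :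
    deltaFour (ringedTree k) u v w x ≤ 40 :=
  ringedTree_forty_hyperbolic_general k u v w x
end

section
/- There exists a constant c_1 such that for all positive integers k and m, the sum over all k-tuples (y_1,...,y_k) of positive integers with y_1 + ··· + y_k = m of 1/(y_1 y_2 ··· y_k) is at most (c_1 ln m)^{k−1}/m. (For k > m the left side is an empty sum, hence 0; for k = m = 1 the right side 0^0 is interpreted as 1.) -/
/-!
Let `S_k(m)` be the sum taken over all `k`-tuples summing to `m`, zero parts allowed; those
contribute `0⁻¹ = 0`. Splitting off the first part gives `S_{k+1}(m) = ∑_{a+b=m} a⁻¹ S_k(b)`.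
By induction `S_k(b) ≤ C_m / b` for all `b ≤ m`, with `C_m = (6 log m)^(k-1)`, and the partial
fractions `1/(ab) = (1/a + 1/b)/m` give `∑_{a+b=m, a,b ≥ 1} 1/(ab) = 2 H_{m-1} / m ≤ 6 log m / m`.
-/

open Finset Real

theorem Finset.Nat.sum_antidiagonalTuple_succ {M : Type*} [AddCommMonoid M] (k n : ℕ)
    (f : (Fin (k + 1) → ℕ) → M) :
    ∑ x ∈ Nat.antidiagonalTuple (k + 1) n, f x =
      ∑ p ∈ antidiagonal n, ∑ x ∈ Nat.antidiagonalTuple k p.2, f (Fin.cons p.1 x) := by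
  rw [sum_sigma']
  refine sum_nbij' (fun x => ⟨(x 0, n - x 0), Fin.tail x⟩) (fun q => Fin.cons q.1.1 q.2)
    ?_ ?_ ?_ ?_ ?_
  · intro x hx
    simp only [mem_sigma, HasAntidiagonal.mem_antidiagonal, Nat.mem_antidiagonalTuple] at hx ⊢
    rw [Fin.sum_univ_succ] at hx
    exact ⟨by omega, by simp only [Fin.tail]; omega⟩
  · rintro ⟨⟨a, b⟩, x⟩ hq
    simp only [mem_sigma, HasAntidiagonal.mem_antidiagonal, Nat.mem_antidiagonalTuple] at hq ⊢
    rw [Fin.sum_cons, hq.2, hq.1]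
  · intro x _
    exact Fin.cons_self_tail x
  · rintro ⟨⟨a, b⟩, x⟩ hq
    simp only [mem_sigma, HasAntidiagonal.mem_antidiagonal] at hq
    simp [← hq.1]
  · intro x _
    simp

noncomputable def compositionHarmonicSum (k m : ℕ) : ℝ :=
  ∑ y ∈ Nat.antidiagonalTuple k m, ∏ i, ((y i : ℝ))⁻¹

theorem sum_filter_pos_inv_prod_eq_compositionHarmonicSum (k m : ℕ) :
    ∑ y ∈ (Nat.antidiagonalTuple k m).filter (fun y => ∀ i, 0 < y i), (∏ i, (y i : ℝ))⁻¹ =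
      compositionHarmonicSum k m := by
  rw [compositionHarmonicSum, sum_filter_of_ne]
  · simp only [prod_inv_distrib]
  · intro y _ hy i
    by_contra! h
    exact hy (by rw [prod_eq_zero (mem_univ i) (by simp [Nat.le_zero.mp h]), inv_zero])

theorem compositionHarmonicSum_zero_right {k : ℕ} (hk : k ≠ 0) :
    compositionHarmonicSum k 0 = 0 := by
  obtain ⟨j, rfl⟩ := Nat.exists_eq_succ_of_ne_zero hk
  simp [compositionHarmonicSum, Nat.antidiagonalTuple_zero_right, Fin.prod_univ_succ]

theorem compositionHarmonicSum_one (m : ℕ) : compositionHarmonicSum 1 m = (m : ℝ)⁻¹ := by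
  simp [compositionHarmonicSum]

theorem compositionHarmonicSum_succ (k m : ℕ) :
    compositionHarmonicSum (k + 1) m =
      ∑ p ∈ antidiagonal m, (p.1 : ℝ)⁻¹ * compositionHarmonicSum k p.2 := by
  simp only [compositionHarmonicSum, Nat.sum_antidiagonalTuple_succ, mul_sum, Fin.prod_univ_succ,
    Fin.cons_zero, Fin.cons_succ]

theorem sum_antidiagonal_inv_mul_inv (n : ℕ) :
    ∑ p ∈ antidiagonal (n + 1), (p.1 : ℝ)⁻¹ * (p.2 : ℝ)⁻¹ = 2 * harmonic n / (n + 1) := by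
  rw [Nat.sum_antidiagonal_eq_sum_range_succ (fun a b => (a : ℝ)⁻¹ * (b : ℝ)⁻¹),
    sum_range_succ', sum_range_succ]
  have hterm : ∀ i ∈ range n, ((i + 1 : ℕ) : ℝ)⁻¹ * ((n + 1 - (i + 1) : ℕ) : ℝ)⁻¹ =
      (((i + 1 : ℕ) : ℝ)⁻¹ + ((n - 1 - i + 1 : ℕ) : ℝ)⁻¹) / (n + 1) := by
    intro i hi
    have hin : i < n := mem_range.mp hi
    rw [show n + 1 - (i + 1) = n - 1 - i + 1 by omega]
    have hsum : ((i + 1 : ℕ) : ℝ) + ((n - 1 - i + 1 : ℕ) : ℝ) = n + 1 := by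
      norm_cast; omega
    field_simp
    linarith
  -- the two end terms vanish as `0⁻¹ = 0`
  simp only [Nat.cast_zero, inv_zero, zero_mul, mul_zero, add_zero, Nat.sub_self]
  rw [sum_congr rfl hterm, ← sum_div, sum_add_distrib,
    sum_range_reflect (fun j => ((j + 1 : ℕ) : ℝ)⁻¹) n]
  simp [harmonic]
  ring

theorem two_mul_harmonic_le_six_mul_log (n : ℕ) :
    2 * (harmonic n : ℝ) ≤ 6 * log (n + 1) := by
  rcases Nat.eq_zero_or_pos n with rfl | hn
  · simp
  have h2 : (2 : ℝ) ≤ n + 1 := by norm_cast; omega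
  have hlog : log n ≤ log (n + 1) := log_le_log (by positivity) (by linarith)
  have hlog2 : 1 ≤ 2 * log (n + 1) := by
    linarith [log_two_gt_d9, log_le_log (by norm_num) h2]
  linarith [harmonic_le_one_add_log n]

theorem compositionHarmonicSum_succ_le (k : ℕ) {m : ℕ} (hm : m ≠ 0) :
    compositionHarmonicSum (k + 1) m ≤ (6 * log m) ^ k / m := by
  induction k generalizing m with
  | zero => simp [compositionHarmonicSum_one]
  | succ k ih =>
    have hbound : ∀ p ∈ antidiagonal m, (p.1 : ℝ)⁻¹ * compositionHarmonicSum (k + 1) p.2 ≤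
        (6 * log m) ^ k * ((p.1 : ℝ)⁻¹ * (p.2 : ℝ)⁻¹) := by
      rintro ⟨a, b⟩ hab
      rw [HasAntidiagonal.mem_antidiagonal] at hab
      rw [mul_left_comm]
      gcongr
      rcases Nat.eq_zero_or_pos b with rfl | hb
      · simp [compositionHarmonicSum_zero_right]
      have hlog : log b ≤ log m :=
        log_le_log (by positivity) (by exact_mod_cast (by omega : b ≤ m))
      calc compositionHarmonicSum (k + 1) b ≤ (6 * log b) ^ k / b := ih hb.ne'
        _ ≤ (6 * log m) ^ k * (b : ℝ)⁻¹ := by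
          rw [div_eq_mul_inv]
          gcongr
    obtain ⟨n, rfl⟩ := Nat.exists_eq_succ_of_ne_zero hm
    calc compositionHarmonicSum (k + 1 + 1) (n + 1)
        ≤ (6 * log (n + 1 : ℕ)) ^ k * (2 * harmonic n / (n + 1)) := by
          rw [compositionHarmonicSum_succ, ← sum_antidiagonal_inv_mul_inv, mul_sum]
          exact sum_le_sum hbound
      _ ≤ (6 * log (n + 1 : ℕ)) ^ k * (6 * log (n + 1 : ℕ) / (n + 1)) := by
          gcongr _ * (?_ / _)
          push_cast
          exact two_mul_harmonic_le_six_mul_log n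
      _ = (6 * log (n + 1 : ℕ)) ^ (k + 1) / (n + 1 : ℕ) := by
          push_cast; ring

/-- There is a constant `c₁` such that for all positive integers `k, m`,
the sum of `1/(y₁ y₂ ⋯ y_k)` over all `k`-tuples of positive integers with
`y₁ + ⋯ + y_k = m` is at most `(c₁ ln m)^(k-1) / m`. (For `k > m` the sum is empty; for
`k = m = 1` the right side `0^0` is interpreted as `1`.) -/
theorem composition_harmonic_sum_bound :
    ∃ c₁ : ℝ, 0 < c₁ ∧
      ∀ k m : ℕ, 1 ≤ k → 1 ≤ m →
        ∑ y ∈ (Finset.Nat.antidiagonalTuple k m).filter (fun y => ∀ i, 0 < y i),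
            (∏ i : Fin k, ((y i : ℕ) : ℝ))⁻¹ ≤
          (c₁ * Real.log m) ^ (k - 1) / m := by
  refine ⟨6, by norm_num, fun k m hk hm => ?_⟩
  obtain ⟨j, rfl⟩ := Nat.exists_eq_add_of_le' hk
  rw [sum_filter_pos_inv_prod_eq_compositionHarmonicSum, Nat.add_sub_cancel]
  exact compositionHarmonicSum_succ_le j (by omega)
end

section
/- For any real constant θ with 0 ≤ θ < 1 there exists a constant c_2 (depending only on θ) such that for all positive integers k and n', every real m, and all nonzero reals λ_1, λ_2, ..., λ_k, the sum over all k-tuples (y_1,...,y_k) ∈ {1,2,...,n'}^k satisfying λ_1 y_1 + λ_2 y_2 + ··· + λ_k y_k = m of 1/(y_1^θ y_2^θ ··· y_k^θ) is at most (c_2 n')^{(k−1)(1−θ)}. (If no such tuple exists, the left side is 0.) -/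
open scoped Classical

lemma aux_key (p : ℝ) (hp0 : 0 < p) (hp1 : p ≤ 1) (y : ℕ) (hy : 1 ≤ y) :
    p * (y:ℝ) ^ (p - 1) ≤ (y:ℝ) ^ p - ((y:ℝ) - 1) ^ p := by
  set t : ℝ := (y:ℝ) with ht
  have ht1 : (1:ℝ) ≤ t := Nat.one_le_cast.mpr hy
  have ht0 : (0:ℝ) < t := lt_of_lt_of_le one_pos ht1
  have hs : -1 ≤ -1/t := by
    rw [neg_div]
    simp only [neg_le_neg_iff]
    rw [div_le_one ht0]; exact ht1
  have h := rpow_one_add_le_one_add_mul_self hs hp0.le hp1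
  have h1 : (1 + -1/t) = (t - 1)/t := by field_simp; ring
  rw [h1] at h
  have h2 : ((t-1)/t) ^ p = (t-1)^p / t^p :=
    Real.div_rpow (by linarith : (0:ℝ) ≤ t - 1) ht0.le p
  rw [h2] at h
  have htp : (0:ℝ) < t ^ p := Real.rpow_pos_of_pos ht0 p
  have h3 : (t-1)^p ≤ (1 + p * (-1/t)) * t^p := by
    rw [div_le_iff₀ htp] at h; linarith [h]
  have h4 : (1 + p * (-1/t)) * t^p = t^p - p * t^(p-1) := by
    have : t ^ (p-1) = t ^ p / t := by
      rw [Real.rpow_sub ht0, Real.rpow_one]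
    rw [this]; field_simp; ring
  rw [h4] at h3; linarith

lemma aux_tel (p : ℝ) (hp0 : 0 < p) (n' : ℕ) :
    ∑ y ∈ Finset.Icc 1 n', ((y:ℝ)^p - ((y:ℝ)-1)^p) = (n':ℝ)^p - ((0:ℝ))^p := by
  induction n' with
  | zero => simp
  | succ n ih =>
      rw [Finset.sum_Icc_succ_top (Nat.one_le_iff_ne_zero.mpr (Nat.succ_ne_zero n)), ih]
      push_cast; ring

lemma aux_sum (θ : ℝ) (hθ0 : 0 ≤ θ) (hθ1 : θ < 1) (n' : ℕ) :
    ∑ y ∈ Finset.Icc 1 n', ((y:ℕ):ℝ) ^ (-θ) ≤ (n':ℝ) ^ (1-θ) / (1-θ) := by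
  have hp0 : (0:ℝ) < 1 - θ := by linarith
  have step : ∀ y ∈ Finset.Icc 1 n', ((y:ℕ):ℝ) ^ (-θ) ≤
      ((y:ℝ)^(1-θ) - ((y:ℝ)-1)^(1-θ)) / (1-θ) := by
    intro y hy
    rw [Finset.mem_Icc] at hy
    have := aux_key (1-θ) hp0 (by linarith) y hy.1
    rw [le_div_iff₀ hp0]
    have heq : (1:ℝ) - θ - 1 = -θ := by ring
    calc (y:ℝ)^(-θ) * (1-θ) = (1-θ) * (y:ℝ)^((1-θ)-1) := by rw [heq]; ring
      _ ≤ _ := this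
  calc ∑ y ∈ Finset.Icc 1 n', ((y:ℕ):ℝ) ^ (-θ)
      ≤ ∑ y ∈ Finset.Icc 1 n', ((y:ℝ)^(1-θ) - ((y:ℝ)-1)^(1-θ)) / (1-θ) :=
        Finset.sum_le_sum step
    _ = (∑ y ∈ Finset.Icc 1 n', ((y:ℝ)^(1-θ) - ((y:ℝ)-1)^(1-θ))) / (1-θ) := by
        rw [Finset.sum_div]
    _ = ((n':ℝ)^(1-θ) - (0:ℝ)^(1-θ)) / (1-θ) := by rw [aux_tel _ hp0]
    _ = (n':ℝ)^(1-θ) / (1-θ) := by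
        rw [Real.zero_rpow (by linarith : 1 - θ ≠ 0)]; ring


/-- For any `0 ≤ θ < 1` there is a constant `c₂` (depending only on `θ`)
such that for all positive integers `k, n'`, every real `m`, and all nonzero reals
`λ₁, …, λ_k`, the sum of `1/(y₁^θ ⋯ y_k^θ)` over all tuples
`(y₁,…,y_k) ∈ {1,…,n'}^k` with `λ₁y₁ + ⋯ + λ_k y_k = m` is at most
`(c₂ n')^((k-1)(1-θ))`. -/
theorem constrained_power_sum_bound (θ : ℝ) (hθ0 : 0 ≤ θ) (hθ1 : θ < 1) :
    ∃ c₂ : ℝ, 0 < c₂ ∧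
      ∀ k n' : ℕ, 1 ≤ k → 1 ≤ n' →
        ∀ (m : ℝ) (lam : Fin k → ℝ), (∀ i, lam i ≠ 0) →
          ∑ y ∈ (Fintype.piFinset fun _ : Fin k => Finset.Icc 1 n').filter
              (fun y => ∑ i, lam i * ((y i : ℕ) : ℝ) = m),
            ∏ i : Fin k, ((y i : ℕ) : ℝ) ^ (-θ) ≤
          (c₂ * n') ^ (((k : ℝ) - 1) * (1 - θ)) := by
  have hp0 : (0:ℝ) < 1 - θ := by linarith
  set p : ℝ := 1 - θ with hp
  refine ⟨(1/p) ^ (1/p), Real.rpow_pos_of_pos (by positivity) _, ?_⟩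
  set c₂ : ℝ := (1/p) ^ (1/p) with hc₂
  intro k n' hk hn' m lam hlam
  obtain ⟨k', rfl⟩ := Nat.exists_eq_succ_of_ne_zero (by omega : k ≠ 0)
  set S := (Fintype.piFinset fun _ : Fin (k'+1) => Finset.Icc 1 n').filter
      (fun y => ∑ i, lam i * ((y i : ℕ) : ℝ) = m) with hS
  have hmem : ∀ y ∈ S, ∀ i, 1 ≤ y i := by
    intro y hy i
    have := (Finset.mem_filter.mp hy).1
    rw [Fintype.mem_piFinset] at this
    exact (Finset.mem_Icc.mp (this i)).1
  -- Step 1: drop last factor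
  have step1 : ∑ y ∈ S, ∏ i : Fin (k'+1), ((y i : ℕ) : ℝ) ^ (-θ) ≤
      ∑ y ∈ S, ∏ i : Fin k', ((y i.castSucc : ℕ) : ℝ) ^ (-θ) := by
    apply Finset.sum_le_sum
    intro y hy
    rw [Fin.prod_univ_castSucc]
    have h1 : ((y (Fin.last k') : ℕ) : ℝ) ^ (-θ) ≤ 1 :=
      Real.rpow_le_one_of_one_le_of_nonpos
        (Nat.one_le_cast.mpr (hmem y hy (Fin.last k'))) (by linarith)
    have h2 : (0:ℝ) ≤ ∏ i : Fin k', ((y i.castSucc : ℕ) : ℝ) ^ (-θ) :=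
      Finset.prod_nonneg fun i _ => Real.rpow_nonneg (Nat.cast_nonneg _) _
    nlinarith [h2, h1]
  -- Step 2: injectivity of F on S
  set F : (Fin (k'+1) → ℕ) → (Fin k' → ℕ) := fun y i => y i.castSucc with hF
  have hinj : ∀ y ∈ S, ∀ y' ∈ S, F y = F y' → y = y' := by
    intro y hy y' hy' hinit
    have hcy := (Finset.mem_filter.mp hy).2
    have hcy' := (Finset.mem_filter.mp hy').2
    rw [Fin.sum_univ_castSucc] at hcy hcy'
    have hsame : ∀ i : Fin k', y i.castSucc = y' i.castSucc := by
      intro i; exact congrFun hinit i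
    have heqsum : ∑ i : Fin k', lam i.castSucc * ((y i.castSucc : ℕ) : ℝ)
        = ∑ i : Fin k', lam i.castSucc * ((y' i.castSucc : ℕ) : ℝ) := by
      apply Finset.sum_congr rfl; intro i _; rw [hsame i]
    have hlast : lam (Fin.last k') * ((y (Fin.last k') : ℕ) : ℝ)
        = lam (Fin.last k') * ((y' (Fin.last k') : ℕ) : ℝ) := by
      rw [heqsum] at hcy; linarith [hcy, hcy']
    have hy_last : y (Fin.last k') = y' (Fin.last k') := by
      have := mul_left_cancel₀ (hlam (Fin.last k')) hlast
      exact_mod_cast this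
    funext i
    induction i using Fin.lastCases with
    | last => exact hy_last
    | cast i => exact hsame i
  -- Step 3: change to sum over image, then over full piFinset
  set G : (Fin k' → ℕ) → ℝ := fun z => ∏ i : Fin k', ((z i : ℕ) : ℝ) ^ (-θ) with hG
  have hGnn : ∀ z, 0 ≤ G z :=
    fun z => Finset.prod_nonneg fun i _ => Real.rpow_nonneg (Nat.cast_nonneg _) _
  have step2 : ∑ y ∈ S, ∏ i : Fin k', ((y i.castSucc : ℕ) : ℝ) ^ (-θ)
      = ∑ z ∈ S.image F, G z := by
    rw [Finset.sum_image hinj]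
  have hsub : S.image F ⊆ Fintype.piFinset fun _ : Fin k' => Finset.Icc 1 n' := by
    intro z hz
    rw [Finset.mem_image] at hz
    obtain ⟨y, hy, rfl⟩ := hz
    rw [Fintype.mem_piFinset]
    intro i
    have := (Finset.mem_filter.mp hy).1
    rw [Fintype.mem_piFinset] at this
    exact this i.castSucc
  have step3 : ∑ z ∈ S.image F, G z ≤
      ∑ z ∈ Fintype.piFinset fun _ : Fin k' => Finset.Icc 1 n', G z :=
    Finset.sum_le_sum_of_subset_of_nonneg hsub (fun z _ _ => hGnn z)
  -- Step 4: factor as power of one-dimensional sum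
  set T : ℝ := ∑ t ∈ Finset.Icc 1 n', ((t:ℕ):ℝ) ^ (-θ) with hT
  have step4 : ∑ z ∈ Fintype.piFinset fun _ : Fin k' => Finset.Icc 1 n', G z = T ^ k' := by
    have h := Finset.prod_univ_sum (fun _ : Fin k' => Finset.Icc 1 n')
      (fun (_ : Fin k') (t : ℕ) => ((t:ℕ):ℝ)^(-θ))
    simp only [hG]
    rw [← h, Finset.prod_const, Finset.card_univ, Fintype.card_fin]
  have hTnn : 0 ≤ T :=
    Finset.sum_nonneg fun t _ => Real.rpow_nonneg (Nat.cast_nonneg _) _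
  have hTle : T ≤ (n':ℝ) ^ p / p := aux_sum θ hθ0 hθ1 n'
  have step5 : T ^ k' ≤ ((n':ℝ) ^ p / p) ^ k' := pow_le_pow_left₀ hTnn hTle k'
  -- Step 6: identify RHS
  have hn'pos : (0:ℝ) < n' := by exact_mod_cast hn'
  have hc2pos : (0:ℝ) < c₂ := Real.rpow_pos_of_pos (by positivity) _
  have hexp : ((((k'+1):ℕ):ℝ) - 1) * p = (k':ℝ) * p := by push_cast; ring
  have hrhs : (c₂ * (n':ℝ)) ^ ((k':ℝ) * p) = ((n':ℝ) ^ p / p) ^ k' := by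
    have hbase : (0:ℝ) ≤ c₂ * n' := by positivity
    rw [mul_comm (k':ℝ) p, Real.rpow_mul hbase, Real.rpow_natCast]
    congr 1
    rw [Real.mul_rpow hc2pos.le hn'pos.le, hc₂, ← Real.rpow_mul (by positivity : (0:ℝ) ≤ 1/p)]
    rw [one_div_mul_cancel (ne_of_gt hp0), Real.rpow_one]
    ring
  calc ∑ y ∈ S, ∏ i : Fin (k'+1), ((y i : ℕ) : ℝ) ^ (-θ)
      ≤ ∑ y ∈ S, ∏ i : Fin k', ((y i.castSucc : ℕ) : ℝ) ^ (-θ) := step1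
    _ = ∑ z ∈ S.image F, G z := step2
    _ ≤ ∑ z ∈ Fintype.piFinset fun _ : Fin k' => Finset.Icc 1 n', G z := step3
    _ = T ^ k' := step4
    _ ≤ ((n':ℝ) ^ p / p) ^ k' := step5
    _ = (c₂ * (n':ℝ)) ^ ((k':ℝ) * p) := hrhs.symm
    _ = (c₂ * (n':ℝ)) ^ (((((k'+1):ℕ):ℝ) - 1) * p) := by rw [hexp]
end

section
/- In the Kleinberg small-world model KSW(n,d,γ) with 0 ≤ γ ≤ d, there is a constant c_5 (depending only on d and γ) such that for any two distinct vertices u and v, the probability that the random graph contains a long-range edge between u and v is at most c_5·(x̄_1 · x̄_2 ··· x̄_d)^{−γ/d} / f(n'), where (x_1,...,x_d) is the edge vector of (u,v). -/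
open MeasureTheory
open scoped ENNReal

/-- Vertex set of the `d`-dimensional grid with side length `n'` (with wrap-around). -/
abbrev GridV (d n' : ℕ) : Type := Fin d → ZMod n'

instance (d n' : ℕ) : MeasurableSpace (GridV d n') := ⊤

/-- The base grid `B`: `u ~ v` iff they differ by `±1 (mod n')` in exactly one coordinate. -/
def gridGraph (d n' : ℕ) : SimpleGraph (GridV d n') where
  Adj u v := u ≠ v ∧ ∃ j : Fin d, (v j = u j + 1 ∨ v j = u j - 1) ∧ ∀ i : Fin d, i ≠ j → v i = u i
  symm := by
    constructor
    rintro u v ⟨hne, j, hj, hoth⟩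
    refine ⟨hne.symm, j, ?_, fun i hi => (hoth i hi).symm⟩
    rcases hj with h | h
    · right; rw [h]; ring
    · left; rw [h]; ring
  loopless := ⟨fun u h => h.1 rfl⟩

/-- The Kleinberg small-world graph determined by the long-range choices `σ`:
all grid edges, plus the undirected long-range edge `(u, σ u)` for every vertex `u`. -/
def kswGraph (d n' : ℕ) (σ : GridV d n' → GridV d n') : SimpleGraph (GridV d n') where
  Adj u v := (gridGraph d n').Adj u v ∨ (u ≠ v ∧ (σ u = v ∨ σ v = u))
  symm := by
    constructor
    rintro u v (h | ⟨hne, h⟩)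
    · exact Or.inl ((gridGraph d n').adj_symm h)
    · exact Or.inr ⟨hne.symm, h.symm⟩
  loopless := by
    constructor
    rintro u (h | ⟨hne, _⟩)
    · exact (gridGraph d n').loopless.irrefl u h
    · exact hne rfl

/-- The (unnormalized) weight with which `u` picks `v` as its long-range contact:
`d_B(u,v)^{-γ}`, and `0` for `v = u`. -/
noncomputable def kswWeight (d n' : ℕ) (γ : ℝ) (u v : GridV d n') : ℝ≥0∞ :=
  if v = u then 0 else ((gridGraph d n').dist u v : ℝ≥0∞) ^ (-γ)

/-- The distribution of the long-range contact of a single vertex `u`: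
`v` is chosen with probability proportional to `d_B(u,v)^{-γ}`. -/
noncomputable def kswCoordMeasure (d : ℕ) (n' : ℕ+) (γ : ℝ) (u : GridV d n') :
    Measure (GridV d n') :=
  (∑ v : GridV d n', kswWeight d n' γ u v)⁻¹ •
    ∑ v : GridV d n', kswWeight d n' γ u v • Measure.dirac v

/-- The law of the random graph `KSW(n, d, γ)` (with `n = n'^d`), as the product measure of
the independent long-range choices of all vertices. -/
noncomputable def kswMeasure (d : ℕ) (n' : ℕ+) (γ : ℝ) :
    Measure (GridV d n' → GridV d n') :=
  Measure.pi fun u => kswCoordMeasure d n' γ u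

/-- The normalization function `f`: `f(s) = ln s` if `γ = d`, and `f(s) = s^{d-γ}` if `γ < d`. -/
noncomputable def fKSW (d : ℕ) (γ : ℝ) (s : ℕ) : ℝ :=
  if γ = d then Real.log s else (s : ℝ) ^ ((d : ℝ) - γ)

/-- `x̄` for one coordinate of the edge vector: for `z = v i - u i : ZMod n'`, the absolute
value of the representative of `z` in `{-⌊n'/2⌋, …, ⌊(n'-1)/2⌋}`, replaced by `1` when it
is `0`. -/
def barCoord {n : ℕ} [NeZero n] (z : ZMod n) : ℕ :=
  if z = 0 then 1 else min z.val (-z).val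

/-!
By the union bound the event splits into the two choices `σ u = v` and `σ v = u`, each of
probability `d_B(u,v)^{-γ} / Z`, where `Z` is the normalizer of the choosing vertex. The circular
distance in one coordinate is 1-Lipschitz along grid edges, so every `x̄_i` is at most `d_B(u,v)`
and hence `d_B(u,v)^{-γ} ≤ (x̄_1 ⋯ x̄_d)^{-γ/d}`. It remains to show `Z ≥ d^{-γ} f(n') / 2`.
For `γ < d`, all `n'^d - 1 ≥ n'^d / 2` other vertices lie at distance at most `d n'`.
For `γ = d`, the shell between the boxes `[0,t)^d` and `[0,t+1)^d` around the chooser has at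
least `t^{d-1}` vertices at distance at most `d t`, so it contributes at least `d^{-d} / t`, and
the harmonic sum `∑_{t<n'} 1/t` exceeds `ln n'`.
-/

open SimpleGraph Finset

variable {d n : ℕ}

lemma rpow_neg_le_prod_rpow_neg (hd : 0 < d) {x : Fin d → ℝ} {D γ : ℝ}
    (hx : ∀ i, 1 ≤ x i) (hxD : ∀ i, x i ≤ D) (hγ : 0 ≤ γ) :
    D ^ (-γ) ≤ (∏ i, x i) ^ (-(γ / d)) := by
  have hprod_pos : 0 < ∏ i, x i := prod_pos fun i _ => one_pos.trans_le (hx i)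
  have hprod_le : ∏ i, x i ≤ D ^ (d : ℝ) := by
    calc ∏ i, x i ≤ ∏ _i : Fin d, D :=
          prod_le_prod (fun i _ => zero_le_one.trans (hx i)) fun i _ => hxD i
      _ = D ^ (d : ℝ) := by simp
  have hD : 0 ≤ D := zero_le_one.trans ((hx ⟨0, hd⟩).trans (hxD _))
  calc D ^ (-γ) = (D ^ (d : ℝ)) ^ (-(γ / d)) := by
        rw [← Real.rpow_mul hD]; field_simp
    _ ≤ (∏ i, x i) ^ (-(γ / d)) :=
        Real.rpow_le_rpow_of_nonpos hprod_pos hprod_le (by simp only [neg_nonpos]; positivity)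

lemma sum_range_sum_sdiff_eq_sum {α M : Type*} [DecidableEq α] [AddCommMonoid M]
    {s : ℕ → Finset α} (hs : Monotone s) (hs0 : s 0 = ∅) (f : α → M) (T : ℕ) :
    ∑ t ∈ range T, ∑ a ∈ s (t + 1) \ s t, f a = ∑ a ∈ s T, f a := by
  induction T with
  | zero => simp [hs0]
  | succ T ih => rw [sum_range_succ, ih, add_comm, sum_sdiff (hs T.le_succ)]

lemma log_le_sum_range_inv (n : ℕ) : Real.log n ≤ ∑ t ∈ range n, (t : ℝ)⁻¹ := by
  rcases n with _ | m
  · simp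
  · rw [sum_range_succ']
    simpa [harmonic] using log_add_one_le_harmonic m

lemma pow_sub_one_le_add_one_pow_sub_pow (hd : d ≠ 0) (t : ℕ) :
    t ^ (d - 1) ≤ (t + 1) ^ d - t ^ d := by
  have h : t ^ (d - 1) * (t + 1) ≤ (t + 1) ^ (d - 1) * (t + 1) :=
    Nat.mul_le_mul_right _ (Nat.pow_le_pow_left t.le_succ _)
  rw [pow_sub_one_mul hd, mul_add_one, pow_sub_one_mul hd] at h
  omega

lemma MeasureTheory.Measure.pi_setOf_eq_or_eq_le {ι α : Type*} [Fintype ι] [MeasurableSpace α]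
    [MeasurableSingletonClass α] (μ : ι → Measure α) [∀ i, IsProbabilityMeasure (μ i)]
    (i j : ι) (a b : α) :
    Measure.pi μ {σ | σ i = a ∨ σ j = b} ≤ μ i {a} + μ j {b} := by
  have hpre (k : ι) (c : α) : Measure.pi μ {σ | σ k = c} = μ k {c} :=
    (measurePreserving_eval μ k).measure_preimage (measurableSet_singleton c).nullMeasurableSet
  rw [Set.ofPred_or, ← hpre i a, ← hpre j b]
  exact measure_union_le _ _

lemma natAbs_valMinAbs_sub_le_one_of_adj {u w : GridV d n} (h : (gridGraph d n).Adj u w)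
    (i : Fin d) : (w i - u i).valMinAbs.natAbs ≤ 1 := by
  obtain ⟨-, j, hj, hoth⟩ := h
  have h_one : (1 : ZMod n).valMinAbs.natAbs ≤ 1 := by
    rcases n with _ | n
    · rfl
    · rw [ZMod.valMinAbs_natAbs_eq_min, ZMod.val_one_eq_one_mod]
      exact (min_le_left _ _).trans (Nat.mod_le _ _)
  by_cases hij : i = j
  · subst hij
    rcases hj with h | h
    · simpa [h] using h_one
    · simpa [h, ZMod.natAbs_valMinAbs_neg] using h_one
  · simp [hoth i hij]

lemma natAbs_valMinAbs_sub_le_length {u v : GridV d n} (p : (gridGraph d n).Walk u v)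
    (i : Fin d) : (v i - u i).valMinAbs.natAbs ≤ p.length := by
  induction p with
  | nil => simp
  | @cons a b c hab p ih =>
    rw [Walk.length_cons, show c i - a i = (c i - b i) + (b i - a i) by ring]
    calc _ ≤ ((c i - b i).valMinAbs + (b i - a i).valMinAbs).natAbs :=
          ZMod.natAbs_valMinAbs_add_le _ _
      _ ≤ (c i - b i).valMinAbs.natAbs + (b i - a i).valMinAbs.natAbs := Int.natAbs_add_le _ _
      _ ≤ p.length + 1 := add_le_add ih (natAbs_valMinAbs_sub_le_one_of_adj hab i)

lemma gridGraph_edist_add_single_one_le (u : GridV d n) (i : Fin d) :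
    (gridGraph d n).edist u (u + Pi.single i 1) ≤ 1 := by
  rw [edist_le_one_iff_adj_or_eq]
  by_cases h : u = u + Pi.single i 1
  · exact .inr h
  · exact .inl ⟨h, i, .inl (by simp), fun j hj => by simp [hj]⟩

lemma gridGraph_edist_add_single_le (u : GridV d n) (i : Fin d) (k : ℕ) :
    (gridGraph d n).edist u (u + Pi.single i (k : ZMod n)) ≤ k := by
  induction k with
  | zero => simp
  | succ k ih =>
    rw [Nat.cast_succ, Pi.single_add, ← add_assoc, Nat.cast_succ]
    exact (gridGraph d n).edist_triangle.trans
      (add_le_add ih (gridGraph_edist_add_single_one_le _ i))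

lemma gridGraph_edist_le_sum_val [NeZero n] (u v : GridV d n) :
    (gridGraph d n).edist u v ≤ ∑ i, (v i - u i).val := by
  suffices h : ∀ s : Finset (Fin d),
      (gridGraph d n).edist u (u + ∑ i ∈ s, Pi.single i (v i - u i))
        ≤ ∑ i ∈ s, ((v i - u i).val : ℕ∞) by
    have hsum : ∑ i, Pi.single i (v i - u i) = v - u := univ_sum_single (v - u)
    simpa [hsum] using h univ
  intro s
  induction s using Finset.induction_on with
  | empty => simp
  | insert a s ha ih =>
    rw [sum_insert ha, sum_insert ha, add_comm (Pi.single a _), ← add_assoc,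
      add_comm (_ : ℕ∞)]
    refine (gridGraph d n).edist_triangle.trans (add_le_add ih ?_)
    simpa using gridGraph_edist_add_single_le (u + ∑ i ∈ s, Pi.single i (v i - u i)) a
      (v a - u a).val

lemma gridGraph_reachable [NeZero n] (u v : GridV d n) : (gridGraph d n).Reachable u v :=
  reachable_of_edist_ne_top <| ne_top_of_le_ne_top (by simp) (gridGraph_edist_le_sum_val u v)

lemma gridGraph_dist_le_sum_val [NeZero n] (u v : GridV d n) :
    (gridGraph d n).dist u v ≤ ∑ i, (v i - u i).val := by
  have h := gridGraph_edist_le_sum_val u v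
  rwa [← (gridGraph_reachable u v).coe_dist_eq_edist, Nat.cast_le] at h

lemma natAbs_valMinAbs_sub_le_gridGraph_dist [NeZero n] (u v : GridV d n) (i : Fin d) :
    (v i - u i).valMinAbs.natAbs ≤ (gridGraph d n).dist u v := by
  obtain ⟨p, hp⟩ := (gridGraph_reachable u v).exists_walk_length_eq_dist
  exact hp ▸ natAbs_valMinAbs_sub_le_length p i

lemma barCoord_eq_natAbs_valMinAbs [NeZero n] {z : ZMod n} (hz : z ≠ 0) :
    barCoord z = z.valMinAbs.natAbs := by
  rw [barCoord, if_neg hz, ZMod.valMinAbs_natAbs_eq_min, ZMod.neg_val, if_neg hz]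

lemma one_le_barCoord [NeZero n] (z : ZMod n) : 1 ≤ barCoord z := by
  by_cases hz : z = 0
  · simp [barCoord, hz]
  · rw [barCoord_eq_natAbs_valMinAbs hz, Nat.one_le_iff_ne_zero, Int.natAbs_ne_zero,
      Ne, ZMod.valMinAbs_eq_zero]
    exact hz

lemma barCoord_le_gridGraph_dist [NeZero n] {u v : GridV d n} (huv : u ≠ v) (i : Fin d) :
    barCoord (v i - u i) ≤ (gridGraph d n).dist u v := by
  by_cases hz : v i - u i = 0
  · simpa [barCoord, hz, Nat.one_le_iff_ne_zero, Nat.pos_iff_ne_zero] using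
      (gridGraph_reachable u v).pos_dist_of_ne huv
  · rw [barCoord_eq_natAbs_valMinAbs hz]
    exact natAbs_valMinAbs_sub_le_gridGraph_dist u v i

lemma GridV.one_lt_of_ne [NeZero n] {u v : GridV d n} (huv : u ≠ v) : 1 < n := by
  by_contra! h
  refine huv (funext fun i => ZMod.val_injective n ?_)
  have := (u i).val_lt
  have := (v i).val_lt
  omega

noncomputable def kswNormalizer (d n : ℕ) [NeZero n] (γ : ℝ) (u : GridV d n) : ℝ≥0∞ :=
  ∑ v, kswWeight d n γ u v

lemma kswWeight_of_ne [NeZero n] (γ : ℝ) {u w : GridV d n} (h : w ≠ u) :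
    kswWeight d n γ u w = ENNReal.ofReal (((gridGraph d n).dist u w : ℝ) ^ (-γ)) := by
  have hdist : (0 : ℝ) < (gridGraph d n).dist u w := mod_cast
    (gridGraph_reachable u w).pos_dist_of_ne h.symm
  rw [kswWeight, if_neg h, ← ENNReal.ofReal_rpow_of_pos hdist, ENNReal.ofReal_natCast]

lemma kswWeight_le_one [NeZero n] {γ : ℝ} (hγ : 0 ≤ γ) (u w : GridV d n) :
    kswWeight d n γ u w ≤ 1 := by
  by_cases h : w = u
  · simp [kswWeight, h]
  rw [kswWeight_of_ne γ h, ← ENNReal.ofReal_one]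
  refine ENNReal.ofReal_le_ofReal (Real.rpow_le_one_of_one_le_of_nonpos ?_ (by linarith))
  exact mod_cast (gridGraph_reachable u w).pos_dist_of_ne (Ne.symm h)

lemma kswNormalizer_ne_top [NeZero n] {γ : ℝ} (hγ : 0 ≤ γ) (u : GridV d n) :
    kswNormalizer d n γ u ≠ ⊤ :=
  ENNReal.sum_ne_top.2 fun w _ => ne_top_of_le_ne_top ENNReal.one_ne_top (kswWeight_le_one hγ u w)

lemma ofReal_card_mul_rpow_le_sum_kswWeight [NeZero n] {γ : ℝ} (hγ : 0 ≤ γ) {u : GridV d n}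
    {S : Finset (GridV d n)} (hu : u ∉ S) {r : ℝ}
    (hS : ∀ w ∈ S, (gridGraph d n).dist u w ≤ r) :
    ENNReal.ofReal (#S * r ^ (-γ)) ≤ ∑ w ∈ S, kswWeight d n γ u w := by
  rw [ENNReal.ofReal_mul (by positivity), ENNReal.ofReal_natCast, ← nsmul_eq_mul, ← sum_const]
  refine sum_le_sum fun w hw => ?_
  have hwu : w ≠ u := ne_of_mem_of_not_mem hw hu
  rw [kswWeight_of_ne γ hwu]
  refine ENNReal.ofReal_le_ofReal (Real.rpow_le_rpow_of_nonpos ?_ (hS w hw) (by linarith))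
  exact mod_cast (gridGraph_reachable u w).pos_dist_of_ne hwu.symm

lemma gridGraph_dist_le_mul [NeZero n] {u w : GridV d n} {t : ℕ}
    (hw : ∀ i, (w i - u i).val ≤ t) : (gridGraph d n).dist u w ≤ d * t :=
  calc (gridGraph d n).dist u w ≤ ∑ i, (w i - u i).val := gridGraph_dist_le_sum_val u w
    _ ≤ ∑ _i : Fin d, t := sum_le_sum fun i _ => hw i
    _ = d * t := by simp

lemma ofReal_rpow_le_kswNormalizer (hd : 1 ≤ d) (hn : 1 < n) [NeZero n] {γ : ℝ}
    (hγ : 0 ≤ γ) (u : GridV d n) :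
    ENNReal.ofReal ((d : ℝ) ^ (-γ) / 2 * (n : ℝ) ^ ((d : ℝ) - γ))
      ≤ kswNormalizer d n γ u := by
  have hcard : #(univ.erase u) = n ^ d - 1 := by
    rw [card_erase_of_mem (mem_univ u), card_univ, Fintype.card_fun, ZMod.card, Fintype.card_fin]
  have hdist : ∀ w ∈ univ.erase u, ((gridGraph d n).dist u w : ℝ) ≤ d * n := fun w _ =>
    mod_cast gridGraph_dist_le_mul fun i => (w i - u i).val_lt.le
  unfold kswNormalizer
  refine le_trans ?_ ((ofReal_card_mul_rpow_le_sum_kswWeight hγ (notMem_erase u univ) hdist).trans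
    (sum_le_sum_of_subset (subset_univ _)))
  refine ENNReal.ofReal_le_ofReal ?_
  have hpow : (2 : ℝ) ≤ (n : ℝ) ^ d :=
    calc (2 : ℝ) ≤ n := mod_cast hn
      _ ≤ (n : ℝ) ^ d := le_self_pow₀ (mod_cast hn.le) (by omega)
  have hnd : (n : ℝ) ^ d / 2 ≤ #(univ.erase u) := by
    rw [hcard, Nat.cast_sub (Nat.one_le_pow _ _ (by omega)), Nat.cast_pow, Nat.cast_one]
    linarith
  have hn0 : (0 : ℝ) < n := by positivity
  calc (d : ℝ) ^ (-γ) / 2 * (n : ℝ) ^ ((d : ℝ) - γ)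
        = (n : ℝ) ^ d / 2 * (d * n) ^ (-γ) := by
        rw [Real.mul_rpow (by positivity) hn0.le, sub_eq_add_neg, Real.rpow_add hn0,
          Real.rpow_natCast]
        ring
    _ ≤ #(univ.erase u) * (d * n) ^ (-γ) := by gcongr

def gridBox [NeZero n] (u : GridV d n) (t : ℕ) : Finset (GridV d n) :=
  {w | ∀ i, (w i - u i).val < t}

lemma gridBox_mono [NeZero n] (u : GridV d n) : Monotone (gridBox u) :=
  fun _ _ hst _ hw => by
    simp only [gridBox, mem_filter] at hw ⊢
    exact ⟨hw.1, fun i => (hw.2 i).trans_le hst⟩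

lemma gridBox_zero [NeZero n] (hd : 1 ≤ d) (u : GridV d n) : gridBox u 0 = ∅ :=
  eq_empty_of_forall_notMem fun _ hw => by
    simpa [gridBox] using (mem_filter.1 hw).2 ⟨0, hd⟩

lemma card_gridBox [NeZero n] (u : GridV d n) {t : ℕ} (ht : t ≤ n) :
    #(gridBox u t) = t ^ d := by
  have hcoord (a : ZMod n) : #{z : ZMod n | (z - a).val < t} = t := by
    rw [← card_range t]
    refine card_bij' (fun z _ => (z - a).val) (fun k _ => a + k) (by simp) (fun k hk => ?_)
      (by simp) (fun k hk => ?_) <;>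
      simp_all [ZMod.val_cast_of_lt ((mem_range.1 hk).trans_le ht)]
  have hbox : gridBox u t = Fintype.piFinset fun i => {z : ZMod n | (z - u i).val < t} := by
    ext w; simp [gridBox]
  simp [hbox, hcoord]

lemma ofReal_inv_le_sum_shell_kswWeight (hd : 1 ≤ d) [NeZero n] (u : GridV d n) {t : ℕ}
    (ht : t < n) :
    ENNReal.ofReal ((d : ℝ) ^ (-(d : ℝ)) * (t : ℝ)⁻¹)
      ≤ ∑ w ∈ gridBox u (t + 1) \ gridBox u t, kswWeight d n d u w := by
  rcases Nat.eq_zero_or_pos t with rfl | ht0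
  · simp -- the left side is `ofReal (c * 0⁻¹) = 0`
  have hu : u ∉ gridBox u (t + 1) \ gridBox u t := by simp [gridBox, ht0]
  have hdist : ∀ w ∈ gridBox u (t + 1) \ gridBox u t,
      ((gridGraph d n).dist u w : ℝ) ≤ d * t :=
    fun w hw => mod_cast gridGraph_dist_le_mul fun i => Nat.lt_succ_iff.1 <| by
      simp only [gridBox, mem_sdiff, mem_filter] at hw
      exact hw.1.2 i
  refine le_trans (ENNReal.ofReal_le_ofReal ?_)
    (ofReal_card_mul_rpow_le_sum_kswWeight (Nat.cast_nonneg d) hu hdist)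
  have hcard : ((t ^ (d - 1) : ℕ) : ℝ) ≤ #(gridBox u (t + 1) \ gridBox u t) := by
    rw [card_sdiff_of_subset (gridBox_mono u t.le_succ), card_gridBox u ht,
      card_gridBox u ht.le]
    exact mod_cast pow_sub_one_le_add_one_pow_sub_pow (by omega) t
  have ht_pow : (t : ℝ) ^ d = (t : ℝ) ^ (d - 1) * t := (pow_sub_one_mul (by omega) _).symm
  calc (d : ℝ) ^ (-(d : ℝ)) * (t : ℝ)⁻¹
        = ((t ^ (d - 1) : ℕ) : ℝ) * (d * t) ^ (-(d : ℝ)) := by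
        rw [Real.rpow_neg (by positivity), Real.rpow_neg (by positivity), Real.rpow_natCast,
          Real.rpow_natCast, mul_pow, Nat.cast_pow, ht_pow]
        field_simp
    _ ≤ #(gridBox u (t + 1) \ gridBox u t) * (d * t) ^ (-(d : ℝ)) := by gcongr

lemma ofReal_log_le_kswNormalizer (hd : 1 ≤ d) [NeZero n] (u : GridV d n) :
    ENNReal.ofReal ((d : ℝ) ^ (-(d : ℝ)) * Real.log n) ≤ kswNormalizer d n d u :=
  calc ENNReal.ofReal ((d : ℝ) ^ (-(d : ℝ)) * Real.log n)
      ≤ ENNReal.ofReal (∑ t ∈ range n, (d : ℝ) ^ (-(d : ℝ)) * (t : ℝ)⁻¹) := by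
        rw [← mul_sum]
        exact ENNReal.ofReal_le_ofReal (by gcongr; exact log_le_sum_range_inv n)
    _ = ∑ t ∈ range n, ENNReal.ofReal ((d : ℝ) ^ (-(d : ℝ)) * (t : ℝ)⁻¹) :=
        ENNReal.ofReal_sum_of_nonneg fun t _ => by positivity
    _ ≤ ∑ t ∈ range n, ∑ w ∈ gridBox u (t + 1) \ gridBox u t, kswWeight d n d u w :=
        sum_le_sum fun t ht => ofReal_inv_le_sum_shell_kswWeight hd u (mem_range.1 ht)
    _ = ∑ w ∈ gridBox u n, kswWeight d n d u w :=
        sum_range_sum_sdiff_eq_sum (gridBox_mono u) (gridBox_zero hd u) _ n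
    _ ≤ kswNormalizer d n d u := sum_le_sum_of_subset (subset_univ _)

lemma fKSW_pos (d : ℕ) (γ : ℝ) (hn : 1 < n) : 0 < fKSW d γ n := by
  unfold fKSW
  split_ifs
  · exact Real.log_pos (mod_cast hn)
  · have : (0 : ℝ) < n := by positivity
    positivity

lemma rpow_neg_div_two_mul_fKSW_pos (hd : 1 ≤ d) (hn : 1 < n) (γ : ℝ) :
    0 < (d : ℝ) ^ (-γ) / 2 * fKSW d γ n := by
  have := fKSW_pos d γ hn
  have : (0 : ℝ) < d := mod_cast hd
  positivity

lemma ofReal_mul_fKSW_le_kswNormalizer (hd : 1 ≤ d) (hn : 1 < n) [NeZero n] {γ : ℝ}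
    (hγ : 0 ≤ γ) (u : GridV d n) :
    ENNReal.ofReal ((d : ℝ) ^ (-γ) / 2 * fKSW d γ n) ≤ kswNormalizer d n γ u := by
  unfold fKSW
  split_ifs with hγd
  · subst hγd
    refine le_trans (ENNReal.ofReal_le_ofReal ?_) (ofReal_log_le_kswNormalizer hd u)
    have : 0 ≤ Real.log n := Real.log_nonneg (mod_cast hn.le)
    gcongr
    linarith [show (0 : ℝ) ≤ (d : ℝ) ^ (-(d : ℝ)) by positivity]
  · exact ofReal_rpow_le_kswNormalizer hd hn hγ u

instance (d n : ℕ) : DiscreteMeasurableSpace (GridV d n) := ⟨fun _ => trivial⟩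

lemma kswCoordMeasure_singleton (n : ℕ+) (γ : ℝ) (u v : GridV d n) :
    kswCoordMeasure d n γ u {v} = (kswNormalizer d n γ u)⁻¹ * kswWeight d n γ u v := by
  simp [kswCoordMeasure, kswNormalizer, Pi.single_apply]

lemma isProbabilityMeasure_kswCoordMeasure {n : ℕ+} {γ : ℝ} (hd : 1 ≤ d) (hn : 1 < (n : ℕ))
    (hγ : 0 ≤ γ) (u : GridV d n) : IsProbabilityMeasure (kswCoordMeasure d n γ u) := by
  have h0 : kswNormalizer d n γ u ≠ 0 :=
    ((ENNReal.ofReal_pos.2 (rpow_neg_div_two_mul_fKSW_pos hd hn γ)).trans_le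
      (ofReal_mul_fKSW_le_kswNormalizer hd hn hγ u)).ne'
  constructor
  simp only [kswCoordMeasure, Measure.smul_apply, Measure.finsetSum_apply, smul_eq_mul,
    measure_univ, mul_one]
  exact ENNReal.inv_mul_cancel h0 (kswNormalizer_ne_top hγ u)

lemma kswCoordMeasure_singleton_le {n : ℕ+} {γ : ℝ} (hd : 1 ≤ d) (hn : 1 < (n : ℕ))
    (hγ : 0 ≤ γ) {u v : GridV d n} (huv : u ≠ v) :
    kswCoordMeasure d n γ u {v} ≤ ENNReal.ofReal
      (2 * (d : ℝ) ^ γ * ((gridGraph d n).dist u v : ℝ) ^ (-γ) / fKSW d γ n) := by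
  have hc := rpow_neg_div_two_mul_fKSW_pos hd hn γ
  rw [kswCoordMeasure_singleton, kswWeight_of_ne γ huv.symm]
  calc (kswNormalizer d n γ u)⁻¹ * _
      ≤ (ENNReal.ofReal ((d : ℝ) ^ (-γ) / 2 * fKSW d γ n))⁻¹
          * ENNReal.ofReal (((gridGraph d n).dist u v : ℝ) ^ (-γ)) := by
        gcongr
        exact ofReal_mul_fKSW_le_kswNormalizer hd hn hγ u
    _ = _ := by
        rw [← ENNReal.ofReal_inv_of_pos hc, ← ENNReal.ofReal_mul (inv_pos.2 hc).le,
          Real.rpow_neg (Nat.cast_nonneg d)]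
        congr 1
        field_simp

theorem ksw_prob_long_range_edge_general (d : ℕ) (hd : 1 ≤ d) (γ : ℝ) (hγ0 : 0 ≤ γ) :
    ∃ c₅ : ℝ, 0 < c₅ ∧
      ∀ (n' : ℕ+) (u v : GridV d n'), u ≠ v →
        kswMeasure d n' γ {σ | σ u = v ∨ σ v = u} ≤
          ENNReal.ofReal
            (c₅ * (∏ i : Fin d, (barCoord (v i - u i) : ℝ)) ^ (-(γ / d)) / fKSW d γ n') := by
  refine ⟨4 * (d : ℝ) ^ γ, by positivity, fun n' u v huv => ?_⟩
  have hn : 1 < (n' : ℕ) := GridV.one_lt_of_ne huv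
  have hf : 0 < fKSW d γ n' := fKSW_pos d γ hn
  have _ (w : GridV d n') := isProbabilityMeasure_kswCoordMeasure hd hn hγ0 w
  set P := ∏ i : Fin d, (barCoord (v i - u i) : ℝ)
  have hP : 0 ≤ P ^ (-(γ / d)) := Real.rpow_nonneg (prod_nonneg fun _ _ => Nat.cast_nonneg _) _
  have hdist : ((gridGraph d n').dist u v : ℝ) ^ (-γ) ≤ P ^ (-(γ / d)) :=
    rpow_neg_le_prod_rpow_neg hd (fun i => mod_cast one_le_barCoord _)
      (fun i => Nat.cast_le.2 (barCoord_le_gridGraph_dist huv i)) hγ0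
  have hchoice {a b : GridV d n'} (hab : a ≠ b)
      (hab' : (gridGraph d n').dist a b = (gridGraph d n').dist u v) :
      kswCoordMeasure d n' γ a {b}
        ≤ ENNReal.ofReal (2 * (d : ℝ) ^ γ * P ^ (-(γ / d)) / fKSW d γ n') :=
    (kswCoordMeasure_singleton_le hd hn hγ0 hab).trans <| ENNReal.ofReal_le_ofReal <| by
      rw [hab']
      gcongr
  calc kswMeasure d n' γ {σ | σ u = v ∨ σ v = u}
      ≤ kswCoordMeasure d n' γ u {v} + kswCoordMeasure d n' γ v {u} :=
        Measure.pi_setOf_eq_or_eq_le _ u v v u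
    _ ≤ _ + _ := add_le_add (hchoice huv rfl) (hchoice huv.symm (SimpleGraph.dist_comm ..))
    _ = _ := by
        rw [← ENNReal.ofReal_add (by positivity) (by positivity)]
        congr 1
        ring

/-- In `KSW(n,d,γ)` with `0 ≤ γ ≤ d`, there is a constant `c₅` (depending
only on `d` and `γ`) such that for any two distinct vertices `u,v`, the probability that the
random graph contains a long-range edge between `u` and `v` is at most
`c₅ (x̄₁ ⋯ x̄_d)^(-γ/d) / f(n')`, where `(x₁,…,x_d)` is the edge vector of `(u,v)`. -/
theorem ksw_prob_long_range_edge (d : ℕ) (hd : 1 ≤ d) (γ : ℝ) (hγ0 : 0 ≤ γ)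
    (hγd : γ ≤ d) :
    ∃ c₅ : ℝ, 0 < c₅ ∧
      ∀ (n' : ℕ+) (u v : GridV d n'), u ≠ v →
        kswMeasure d n' γ {σ | σ u = v ∨ σ v = u} ≤
          ENNReal.ofReal
            (c₅ * (∏ i : Fin d, (barCoord (v i - u i) : ℝ)) ^ (-(γ / d)) / fKSW d γ n') :=
  ksw_prob_long_range_edge_general d hd γ hγ0
end
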